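/- Let (X_t : t ∈ ℤ) be a weakly stationary mean-zero H-valued process with C_h = 0 for all h ≠ 0. Then the spectral density operator satisfies F_θ = C_0/(2π) for all θ, the dynamic eigenfunctions can be chosen constant in θ, φ_m(θ) ≡ v_m where v_m is the m-th eigenfunction of the covariance operator C_0; for this choice the filter coefficients satisfy φ_{m0} = v_m and φ_{mℓ} = 0 for ℓ ≠ 0, and the m-th dynamic FPC score equals the m-th static FPC score: Y_{mt} = ⟨X_t, v_m⟩. -/

import Mathlib

/-! When `C_h = 0` for `h ≠ 0` the series defining `F_θ` has a single term, so `F_θ = C₀/(2π)` does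
not depend on `θ` and has the eigenvectors `v_m` of `C₀`. A constant eigenfunction has Fourier
coefficients `v_m` at `ℓ = 0` and `0` elsewhere, because `∫_{-π}^{π} e^{-iℓs} ds = 0` for `ℓ ≠ 0`;
hence the dynamic filter reduces to the static projection `⟨X_t, v_m⟩`. -/

open MeasureTheory Filter Topology Complex
open scoped ENNReal NNReal

noncomputable section

local notation "⟪" x ", " y "⟫" => @inner ℂ _ _ x y

/-- The rank-one operator `(x ⊗ y)(z) = ⟨z, y⟩·x` (inner product linear in its
first argument, as in the paper), i.e. `z ↦ ⟪y, z⟫ • x` in Mathlib's convention. -/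
def rankOne {H H' : Type*} [NormedAddCommGroup H] [InnerProductSpace ℂ H]
    [NormedAddCommGroup H'] [NormedSpace ℂ H'] (x : H') (y : H) : H →L[ℂ] H' :=
  (innerSL ℂ y).smulRight x

/-- Hilbert–Schmidt norm of an operator, computed w.r.t. a Hilbert basis. -/
def hsNorm {H H' : Type*} [NormedAddCommGroup H] [InnerProductSpace ℂ H]
    [NormedAddCommGroup H'] [NormedSpace ℂ H'] {ι : Type*} (b : HilbertBasis ι ℂ H)
    (T : H →L[ℂ] H') : ℝ :=
  Real.sqrt (∑' i, ‖T (b i)‖ ^ 2)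

/-- Trace (with values in ℝ≥0∞) of a non-negative self-adjoint operator,
computed w.r.t. a Hilbert basis. -/
def traceENN {H : Type*} [NormedAddCommGroup H] [InnerProductSpace ℂ H]
    {ι : Type*} (b : HilbertBasis ι ℂ H) (T : H →L[ℂ] H) : ℝ≥0∞ :=
  ∑' i, ENNReal.ofReal (⟪b i, T (b i)⟫).re

/-- `φ_ℓ = (2π)⁻¹ ∫_{-π}^{π} φ(s) e^{-iℓs} ds`; for the dynamic eigenfunction `φ_m` these are the
filter coefficients `φ_{mℓ}`. -/
def filterCoeff {E : Type*} [NormedAddCommGroup E] [NormedSpace ℂ E] (φ : ℝ → E) (ℓ : ℤ) : E :=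
  (1 / (2 * Real.pi)) • ∫ s in (-Real.pi)..Real.pi, exp (-I * ℓ * s) • φ s

theorem integral_exp_neg_I_int_mul (ℓ : ℤ) :
    ∫ s in (-Real.pi)..Real.pi, exp (-I * ℓ * s) = if ℓ = 0 then ((2 * Real.pi : ℝ) : ℂ) else 0 := by
  split_ifs with hℓ
  · subst hℓ
    simp only [Int.cast_zero, mul_zero, zero_mul, exp_zero, intervalIntegral.integral_const,
      real_smul, mul_one]
    push_cast
    ring
  · have hc : -I * ℓ ≠ 0 := by simpa [I_ne_zero] using hℓ
    rw [integral_exp_mul_complex hc, div_eq_zero_iff, sub_eq_zero]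
    refine Or.inl (exp_eq_exp_iff_exists_int.mpr ⟨-ℓ, ?_⟩)
    push_cast
    ring

theorem filterCoeff_const {E : Type*} [NormedAddCommGroup E] [NormedSpace ℂ E] [CompleteSpace E]
    (v : E) (ℓ : ℤ) : filterCoeff (fun _ => v) ℓ = if ℓ = 0 then v else 0 := by
  rw [filterCoeff, intervalIntegral.integral_smul_const, integral_exp_neg_I_int_mul]
  split_ifs
  · rw [Complex.coe_smul, smul_smul, one_div_mul_cancel (by positivity), one_smul]
  · rw [zero_smul, smul_zero]

theorem spectralDensity_eq_of_uncorrelated {E : Type*} [NormedAddCommGroup E] [NormedSpace ℂ E]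
    {C : ℤ → E} (hC : ∀ h : ℤ, h ≠ 0 → C h = 0) (c : ℂ) (θ : ℝ) {S : E}
    (hS : HasSum (fun h : ℤ => c • (exp (-I * h * θ) • C h)) S) : S = c • C 0 := by
  have hS₀ : HasSum (fun h : ℤ => c • (exp (-I * h * θ) • C h))
      (c • (exp (-I * (0 : ℤ) * θ) • C 0)) :=
    hasSum_single 0 fun h hh => by simp [hC h hh]
  simpa using hS.unique hS₀

theorem stmt_2_general
    {H : Type*} [NormedAddCommGroup H] [InnerProductSpace ℂ H] [CompleteSpace H]
    {Ω : Type*}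
    (X : ℤ → Ω → H)
    (C : ℤ → H →L[ℂ] H)
    (hCzero : ∀ h : ℤ, h ≠ 0 → C h = 0)
    (F : ℝ → H →L[ℂ] H)
    (hF : ∀ θ : ℝ, HasSum
      (fun h : ℤ => (1 / (2 * (Real.pi : ℂ))) • (Complex.exp (-Complex.I * h * θ) • C h)) (F θ))
    (v : ℕ → H) (μ : ℕ → ℝ)
    (hv_eig : ∀ m, C 0 (v m) = (μ m : ℂ) • v m) :
    (∀ θ : ℝ, F θ = (1 / (2 * (Real.pi : ℂ))) • C 0) ∧
    (∀ (θ : ℝ) (m : ℕ), F θ (v m) = ((1 / (2 * Real.pi) * μ m : ℝ) : ℂ) • v m) ∧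
    (∀ (m : ℕ) (ℓ : ℤ),
      ((1 / (2 * Real.pi)) • ∫ s in (-Real.pi)..Real.pi, Complex.exp (-Complex.I * ℓ * s) • v m)
        = if ℓ = 0 then v m else 0) ∧
    (∀ (m : ℕ) (t : ℤ) (ω : Ω),
      HasSum (fun ℓ : ℤ => ⟪(if ℓ = 0 then v m else (0 : H)), X (t - ℓ) ω⟫) ⟪v m, X t ω⟫) := by
  have hF_eq θ := spectralDensity_eq_of_uncorrelated hCzero _ θ (hF θ)
  refine ⟨hF_eq, fun θ m => ?_, fun m ℓ => filterCoeff_const (v m) ℓ, fun m t ω => ?_⟩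
  · rw [hF_eq, smul_apply, hv_eig, smul_smul]
    congr 1
    push_cast
    ring
  · have hsingle : HasSum (fun ℓ : ℤ => ⟪(if ℓ = 0 then v m else (0 : H)), X (t - ℓ) ω⟫)
        ⟪(if (0 : ℤ) = 0 then v m else (0 : H)), X (t - 0) ω⟫ :=
      hasSum_single 0 fun ℓ hℓ => by simp [hℓ]
    simpa using hsingle

/-- Proposition 2(b): if C_h = 0 for h ≠ 0, then F_θ = C₀/(2π), the dynamic
eigenfunctions can be chosen constant equal to the static FPCs v_m, the filter
coefficients are φ_{m0} = v_m and φ_{mℓ} = 0 for ℓ ≠ 0, and the dynamic scores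
coincide with the static scores ⟨X_t, v_m⟩. -/
theorem stmt_2
    {H : Type*} [NormedAddCommGroup H] [InnerProductSpace ℂ H] [CompleteSpace H]
    {ι : Type*} [Countable ι] (b : HilbertBasis ι ℂ H)
    {Ω : Type*} [MeasurableSpace Ω] {P : Measure Ω} [IsProbabilityMeasure P]
    (X : ℤ → Ω → H)
    (hXmeas : ∀ t, AEStronglyMeasurable (X t) P)
    (hXL2 : ∀ t, MemLp (X t) 2 P)
    (hXmean : ∀ t, ∫ ω, X t ω ∂P = 0)
    (C : ℤ → H →L[ℂ] H)
    (hCstat : ∀ t h : ℤ, ∫ ω, rankOne (X (t + h) ω) (X t ω) ∂P = C h)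
    (hCzero : ∀ h : ℤ, h ≠ 0 → C h = 0)
    (F : ℝ → H →L[ℂ] H)
    (hF : ∀ θ : ℝ, HasSum
      (fun h : ℤ => (1 / (2 * (Real.pi : ℂ))) • (Complex.exp (-Complex.I * h * θ) • C h)) (F θ))
    (v : ℕ → H) (μ : ℕ → ℝ)
    (hμ_nonneg : ∀ m, 0 ≤ μ m)
    (hμ_mono : Antitone μ)
    (hv_norm : ∀ m, ‖v m‖ = 1)
    (hv_eig : ∀ m, C 0 (v m) = (μ m : ℂ) • v m)
    (hv_ON : Orthonormal ℂ v)
    (hv_exp : ∀ x : H, HasSum (fun m => ((μ m : ℂ) * ⟪v m, x⟫) • v m) (C 0 x)) :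
    (∀ θ : ℝ, F θ = (1 / (2 * (Real.pi : ℂ))) • C 0) ∧
    (∀ (θ : ℝ) (m : ℕ), F θ (v m) = ((1 / (2 * Real.pi) * μ m : ℝ) : ℂ) • v m) ∧
    (∀ (m : ℕ) (ℓ : ℤ),
      ((1 / (2 * Real.pi)) • ∫ s in (-Real.pi)..Real.pi, Complex.exp (-Complex.I * ℓ * s) • v m)
        = if ℓ = 0 then v m else 0) ∧
    (∀ (m : ℕ) (t : ℤ) (ω : Ω),
      HasSum (fun ℓ : ℤ => ⟪(if ℓ = 0 then v m else (0 : H)), X (t - ℓ) ω⟫) ⟪v m, X t ω⟫) :=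
  stmt_2_general X C hCzero F hF v μ hv_eig
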